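/- arXiv:1503.06642 — 4 statements merged into one kernel-verified Lean document; each statement's English description precedes it below -/
import Mathlib

section
/- Let P be a finite set of pixels, N a finite set of ordered pairs of pixels (the neighborhood system), χ^1,…,χ^K : P → {0,1} superpixel indicators with χ^k_p · χ^l_p = 0 for k ≠ l and Σ_{k=1}^K χ^k_p = 1 for all p, let x_1,…,x_K ∈ {0,1}, f_p = Σ_{k=1}^K x_k χ^k_p, and let w^{00} : N → ℝ. Then Σ_{(p,q)∈N} w^{00}_{pq}(1−f_p)(1−f_q) = Σ_{k=1}^K (−ω^{00}_k) x_k + Σ_{k≠l} ω^{00}_{kl}(1−x_k)(1−x_l) + Σ_{k=1}^K ω^{00}_k, where ω^{00}_k = Σ_{(p,q)∈N} w^{00}_{pq} χ^k_p χ^k_q and ω^{00}_{kl} = Σ_{(p,q)∈N} w^{00}_{pq} χ^k_p χ^l_q. -/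
/-- Superpixelization of the `00` pairwise term:
`∑ (p,q) ∈ N, w00 pq (1-f p)(1-f q)
  = ∑ k, (-ω00 k) x k + ∑ k ≠ l, ω00 kl (1-x k)(1-x l) + ∑ k, ω00 k`. -/
theorem superpixel_pairwise00 {P : Type*} [Fintype P] [DecidableEq P] {K : ℕ}
    (N : Finset (P × P))
    (χ : Fin K → P → ℝ)
    (hχ01 : ∀ k p, χ k p = 0 ∨ χ k p = 1)
    (hdisj : ∀ k l, k ≠ l → ∀ p, χ k p * χ l p = 0)
    (hpart : ∀ p, ∑ k, χ k p = 1)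
    (x : Fin K → ℝ) (hx : ∀ k, x k = 0 ∨ x k = 1)
    (f : P → ℝ) (hf : ∀ p, f p = ∑ k, x k * χ k p)
    (w00 : P × P → ℝ) :
    ∑ pq ∈ N, w00 pq * (1 - f pq.1) * (1 - f pq.2)
      = ∑ k, (-(∑ pq ∈ N, w00 pq * χ k pq.1 * χ k pq.2)) * x k
        + ∑ k, ∑ l ∈ ({k}ᶜ : Finset (Fin K)),
            (∑ pq ∈ N, w00 pq * χ k pq.1 * χ l pq.2) * (1 - x k) * (1 - x l)
        + ∑ k, (∑ pq ∈ N, w00 pq * χ k pq.1 * χ k pq.2) := by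
  have h1 : ∀ p, 1 - f p = ∑ k, (1 - x k) * χ k p := by
    intro p
    simp only [sub_mul, one_mul, Finset.sum_sub_distrib, hpart, hf]
  have hxx : ∀ k : Fin K, (1 - x k) * (1 - x k) = 1 - x k := by
    intro k; rcases hx k with h | h <;> simp [h]
  -- T k l as common form
  set T : Fin K → Fin K → ℝ := fun k l =>
    (∑ pq ∈ N, w00 pq * χ k pq.1 * χ l pq.2) * (1 - x k) * (1 - x l) with hT
  have hdiag : ∀ k, T k k
      = (-(∑ pq ∈ N, w00 pq * χ k pq.1 * χ k pq.2)) * x k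
        + (∑ pq ∈ N, w00 pq * χ k pq.1 * χ k pq.2) := by
    intro k
    rw [hT]
    simp only [mul_assoc, hxx]
    ring
  have hRHS : ∑ k, ∑ l, T k l
      = ∑ k, (-(∑ pq ∈ N, w00 pq * χ k pq.1 * χ k pq.2)) * x k
        + ∑ k, ∑ l ∈ ({k}ᶜ : Finset (Fin K)), T k l
        + ∑ k, (∑ pq ∈ N, w00 pq * χ k pq.1 * χ k pq.2) := by
    have : ∀ k : Fin K, ∑ l, T k l = T k k + ∑ l ∈ ({k}ᶜ : Finset (Fin K)), T k l := by
      intro k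
      rw [← Finset.sum_compl_add_sum ({k} : Finset (Fin K))]
      simp [add_comm]
    simp_rw [this, Finset.sum_add_distrib, hdiag]
    rw [Finset.sum_add_distrib]
    ring
  rw [← hRHS]
  simp_rw [h1]
  have hswap : ∀ pq : P × P,
      w00 pq * (∑ k, (1 - x k) * χ k pq.1) * (∑ l, (1 - x l) * χ l pq.2)
      = ∑ k, ∑ l, w00 pq * χ k pq.1 * χ l pq.2 * (1 - x k) * (1 - x l) := by
    intro pq
    rw [mul_assoc, Finset.sum_mul_sum]
    rw [Finset.mul_sum]
    refine Finset.sum_congr rfl fun k _ => ?_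
    rw [Finset.mul_sum]
    refine Finset.sum_congr rfl fun l _ => ?_
    ring
  simp_rw [hswap]
  rw [Finset.sum_comm]
  refine Finset.sum_congr rfl fun k _ => ?_
  rw [Finset.sum_comm]
  refine Finset.sum_congr rfl fun l _ => ?_
  rw [hT]
  simp only [Finset.sum_mul]
end

section
/- (Superpixelization of binary MRF, Proposition 1.) Let P be a finite set of pixels, N a finite set of ordered pairs of pixels, χ^1,…,χ^K : P → {0,1} superpixel indicators with χ^k_p · χ^l_p = 0 for k ≠ l and Σ_{k=1}^K χ^k_p = 1 for all p, let x_1,…,x_K ∈ {0,1}, f_p = Σ_{k=1}^K x_k χ^k_p, and let w : P → ℝ and w^{00}, w^{01}, w^{10}, w^{11} : N → ℝ. Then the pixel-level MRF energy Σ_{p∈P} w_p f_p + Σ_{(p,q)∈N} ( w^{00}_{pq}(1−f_p)(1−f_q) + w^{01}_{pq}(1−f_p)f_q + w^{10}_{pq} f_p(1−f_q) + w^{11}_{pq} f_p f_q ) equals Σ_{k=1}^K ω̂_k x_k + Σ_{k≠l} ( ω^{00}_{kl}(1−x_k)(1−x_l) + ω^{01}_{kl}(1−x_k)x_l + ω^{10}_{kl}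 x_k(1−x_l) + ω^{11}_{kl} x_k x_l ) + C, where ω̂_k = ω_k − ω^{00}_k + ω^{11}_k, ω_k = Σ_{p∈P} w_p χ^k_p, ω^{mn}_k = Σ_{(p,q)∈N} w^{mn}_{pq} χ^k_p χ^k_q, ω^{mn}_{kl} = Σ_{(p,q)∈N} w^{mn}_{pq} χ^k_p χ^l_q for m,n ∈ {0,1}, and C = Σ_{k=1}^K ω^{00}_k is a constant independent of x. -/
/-- Per-edge identity: expanding the four pairwise terms over superpixels. -/
lemma superpixelize_pq {K : ℕ} (χp χq : Fin K → ℝ) (x : Fin K → ℝ)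
    (hx : ∀ k, x k * x k = x k)
    (a b c d : ℝ)
    (hsp : ∑ k, χp k = 1) (hsq : ∑ k, χq k = 1) :
    a * (1 - ∑ k, x k * χp k) * (1 - ∑ k, x k * χq k)
      + b * (1 - ∑ k, x k * χp k) * (∑ k, x k * χq k)
      + c * (∑ k, x k * χp k) * (1 - ∑ k, x k * χq k)
      + d * (∑ k, x k * χp k) * (∑ k, x k * χq k)
    = (∑ k, (-(a * χp k * χq k) + d * χp k * χq k) * x k)
      + (∑ k, ∑ l ∈ ({k}ᶜ : Finset (Fin K)),
          (a * χp k * χq l * (1 - x k) * (1 - x l)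
            + b * χp k * χq l * (1 - x k) * x l
            + c * χp k * χq l * x k * (1 - x l)
            + d * χp k * χq l * x k * x l))
      + ∑ k, a * χp k * χq k := by
  have h1 : (1 - ∑ k, x k * χp k) = ∑ k, (1 - x k) * χp k := by
    simp [sub_mul, Finset.sum_sub_distrib, hsp]
  have h2 : (1 - ∑ k, x k * χq k) = ∑ k, (1 - x k) * χq k := by
    simp [sub_mul, Finset.sum_sub_distrib, hsq]
  rw [h1, h2]
  have expand : ∀ (u v : Fin K → ℝ) (e : ℝ),
      e * (∑ k, u k * χp k) * (∑ l, v l * χq l)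
        = ∑ k, ∑ l, e * χp k * χq l * u k * v l := by
    intro u v e
    rw [mul_assoc, Finset.sum_mul_sum]
    simp only [Finset.mul_sum]
    refine Finset.sum_congr rfl fun k _ => Finset.sum_congr rfl fun l _ => by ring
  rw [expand (fun k => 1 - x k) (fun l => 1 - x l) a,
      expand (fun k => 1 - x k) x b,
      expand x (fun l => 1 - x l) c,
      expand x x d]
  simp only [← Finset.sum_add_distrib]
  have split : ∀ k : Fin K,
      (∑ l, (a * χp k * χq l * (1 - x k) * (1 - x l)
            + b * χp k * χq l * (1 - x k) * x l
            + c * χp k * χq l * x k * (1 - x l)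
            + d * χp k * χq l * x k * x l))
      = ((-(a * χp k * χq k) + d * χp k * χq k) * x k
          + (∑ l ∈ ({k}ᶜ : Finset (Fin K)),
              (a * χp k * χq l * (1 - x k) * (1 - x l)
                + b * χp k * χq l * (1 - x k) * x l
                + c * χp k * χq l * x k * (1 - x l)
                + d * χp k * χq l * x k * x l))
          + a * χp k * χq k) := by
    intro k
    rw [← Finset.sum_add_sum_compl {k}]
    rw [Finset.sum_singleton]
    have hk := hx k
    linear_combination (a - b - c + d) * χp k * χq k * hk
  calc ∑ k, (∑ l, (a * χp k * χq l * (1 - x k) * (1 - x l)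
            + b * χp k * χq l * (1 - x k) * x l
            + c * χp k * χq l * x k * (1 - x l)
            + d * χp k * χq l * x k * x l))
      = ∑ k, ((-(a * χp k * χq k) + d * χp k * χq k) * x k
          + (∑ l ∈ ({k}ᶜ : Finset (Fin K)),
              (a * χp k * χq l * (1 - x k) * (1 - x l)
                + b * χp k * χq l * (1 - x k) * x l
                + c * χp k * χq l * x k * (1 - x l)
                + d * χp k * χq l * x k * x l))
          + a * χp k * χq k) := Finset.sum_congr rfl fun k _ => split k
    _ = _ := by rw [Finset.sum_add_distrib, Finset.sum_add_distrib]

/-- Proposition 1 (superpixelization of binary MRF): the pixel-level MRF energy,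
evaluated on a superpixel-induced labeling, equals the superpixel-level MRF
energy plus a constant `C = ∑ k, ω00 k`. Here
`ω̂ k = ω k - ω00 k + ω11 k`, `ω k = ∑ p, w p * χ k p`,
`ωmn k = ∑ (p,q) ∈ N, wmn pq * χ k p * χ k q`, and
`ωmn kl = ∑ (p,q) ∈ N, wmn pq * χ k p * χ l q`. -/
theorem superpixelize_binary_MRF {P : Type*} [Fintype P] [DecidableEq P] {K : ℕ}
    (N : Finset (P × P))
    (χ : Fin K → P → ℝ)
    (hχ01 : ∀ k p, χ k p = 0 ∨ χ k p = 1)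
    (hdisj : ∀ k l, k ≠ l → ∀ p, χ k p * χ l p = 0)
    (hpart : ∀ p, ∑ k, χ k p = 1)
    (x : Fin K → ℝ) (hx : ∀ k, x k = 0 ∨ x k = 1)
    (f : P → ℝ) (hf : ∀ p, f p = ∑ k, x k * χ k p)
    (w : P → ℝ) (w00 w01 w10 w11 : P × P → ℝ) :
    (∑ p, w p * f p)
      + ∑ pq ∈ N, (w00 pq * (1 - f pq.1) * (1 - f pq.2)
          + w01 pq * (1 - f pq.1) * f pq.2
          + w10 pq * f pq.1 * (1 - f pq.2)
          + w11 pq * f pq.1 * f pq.2)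
    = (∑ k, ((∑ p, w p * χ k p)
              - (∑ pq ∈ N, w00 pq * χ k pq.1 * χ k pq.2)
              + (∑ pq ∈ N, w11 pq * χ k pq.1 * χ k pq.2)) * x k)
      + (∑ k, ∑ l ∈ ({k}ᶜ : Finset (Fin K)),
          ((∑ pq ∈ N, w00 pq * χ k pq.1 * χ l pq.2) * (1 - x k) * (1 - x l)
            + (∑ pq ∈ N, w01 pq * χ k pq.1 * χ l pq.2) * (1 - x k) * x l
            + (∑ pq ∈ N, w10 pq * χ k pq.1 * χ l pq.2) * x k * (1 - x l)
            + (∑ pq ∈ N, w11 pq * χ k pq.1 * χ l pq.2) * x k * x l))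
      + (∑ k, ∑ pq ∈ N, w00 pq * χ k pq.1 * χ k pq.2) := by
  have hx2 : ∀ k, x k * x k = x k := by
    intro k; rcases hx k with h | h <;> rw [h] <;> ring
  -- unary part
  have hun : (∑ p, w p * f p) = ∑ k, (∑ p, w p * χ k p) * x k := by
    simp only [hf, Finset.mul_sum]
    rw [Finset.sum_comm]
    refine Finset.sum_congr rfl fun k _ => ?_
    rw [Finset.sum_mul]
    exact Finset.sum_congr rfl fun p _ => by ring
  -- pairwise part
  have hpair : (∑ pq ∈ N, (w00 pq * (1 - f pq.1) * (1 - f pq.2)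
          + w01 pq * (1 - f pq.1) * f pq.2
          + w10 pq * f pq.1 * (1 - f pq.2)
          + w11 pq * f pq.1 * f pq.2))
      = ∑ pq ∈ N,
          ((∑ k, (-(w00 pq * χ k pq.1 * χ k pq.2) + w11 pq * χ k pq.1 * χ k pq.2) * x k)
          + (∑ k, ∑ l ∈ ({k}ᶜ : Finset (Fin K)),
              (w00 pq * χ k pq.1 * χ l pq.2 * (1 - x k) * (1 - x l)
                + w01 pq * χ k pq.1 * χ l pq.2 * (1 - x k) * x l
                + w10 pq * χ k pq.1 * χ l pq.2 * x k * (1 - x l)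
                + w11 pq * χ k pq.1 * χ l pq.2 * x k * x l))
          + ∑ k, w00 pq * χ k pq.1 * χ k pq.2) := by
    refine Finset.sum_congr rfl fun pq _ => ?_
    rw [hf pq.1, hf pq.2]
    exact superpixelize_pq (fun k => χ k pq.1) (fun k => χ k pq.2) x hx2
      (w00 pq) (w01 pq) (w10 pq) (w11 pq) (hpart pq.1) (hpart pq.2)
  rw [hun, hpair]
  rw [Finset.sum_add_distrib, Finset.sum_add_distrib]
  have e1 : (∑ k, (∑ p, w p * χ k p) * x k)
      + (∑ pq ∈ N, ∑ k,
        (-(w00 pq * χ k pq.1 * χ k pq.2) + w11 pq * χ k pq.1 * χ k pq.2) * x k)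
      = ∑ k, ((∑ p, w p * χ k p)
              - (∑ pq ∈ N, w00 pq * χ k pq.1 * χ k pq.2)
              + (∑ pq ∈ N, w11 pq * χ k pq.1 * χ k pq.2)) * x k := by
    rw [Finset.sum_comm, ← Finset.sum_add_distrib]
    refine Finset.sum_congr rfl fun k _ => ?_
    rw [← Finset.sum_mul, Finset.sum_add_distrib, Finset.sum_neg_distrib]
    ring
  have e2 : (∑ pq ∈ N, ∑ k, ∑ l ∈ ({k}ᶜ : Finset (Fin K)),
              (w00 pq * χ k pq.1 * χ l pq.2 * (1 - x k) * (1 - x l)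
                + w01 pq * χ k pq.1 * χ l pq.2 * (1 - x k) * x l
                + w10 pq * χ k pq.1 * χ l pq.2 * x k * (1 - x l)
                + w11 pq * χ k pq.1 * χ l pq.2 * x k * x l))
      = ∑ k, ∑ l ∈ ({k}ᶜ : Finset (Fin K)),
          ((∑ pq ∈ N, w00 pq * χ k pq.1 * χ l pq.2) * (1 - x k) * (1 - x l)
            + (∑ pq ∈ N, w01 pq * χ k pq.1 * χ l pq.2) * (1 - x k) * x l
            + (∑ pq ∈ N, w10 pq * χ k pq.1 * χ l pq.2) * x k * (1 - x l)
            + (∑ pq ∈ N, w11 pq * χ k pq.1 * χ l pq.2) * x k * x l) := by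
    rw [Finset.sum_comm]
    refine Finset.sum_congr rfl fun k _ => ?_
    rw [Finset.sum_comm]
    refine Finset.sum_congr rfl fun l _ => ?_
    simp only [Finset.sum_mul, ← Finset.sum_add_distrib]
  have e3 : (∑ pq ∈ N, ∑ k, w00 pq * χ k pq.1 * χ k pq.2)
      = ∑ k, ∑ pq ∈ N, w00 pq * χ k pq.1 * χ k pq.2 := Finset.sum_comm
  rw [← e1, ← e2, ← e3]
  ring
end

section
/- (Superpixelized Potts model.) Let P be a finite set of pixels, N a finite set of ordered pairs of pixels, χ^1,…,χ^K : P → {0,1} superpixel indicators with χ^k_p · χ^l_p = 0 for k ≠ l and Σ_{k=1}^K χ^k_p = 1 for all p, let x_1,…,x_K ∈ {0,1}, f_p = Σ_{k=1}^K x_k χ^k_p, and let w : P → ℝ and w' : N → ℝ. Then the pixel-level Potts energy Σ_{p∈P} w_p f_p + Σ_{(p,q)∈N} w'_{pq} |f_p − f_q|² equals the superpixel-level Potts energy Σ_{k=1}^K ω_k x_k + Σ_{k≠l} ω_{kl} |x_k − x_l|², where ω_k = Σ_{p∈P} w_p χ^k_p and ω_{kl} = Σ_{(p,q)∈N} w'_{pq}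 χ^k_p χ^l_q. -/
lemma superpixel_unique {P : Type*} [Fintype P] {K : ℕ}
    (χ : Fin K → P → ℝ)
    (hχ01 : ∀ k p, χ k p = 0 ∨ χ k p = 1)
    (hdisj : ∀ k l, k ≠ l → ∀ p, χ k p * χ l p = 0)
    (hpart : ∀ p, ∑ k, χ k p = 1) (p : P) :
    ∃ k, χ k p = 1 ∧ ∀ l, l ≠ k → χ l p = 0 := by
  have h : ∃ k, χ k p ≠ 0 := by
    by_contra h
    push_neg at h
    have := hpart p
    simp [h] at this
  obtain ⟨k, hk⟩ := h
  have hk1 : χ k p = 1 := (hχ01 k p).resolve_left hk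
  refine ⟨k, hk1, fun l hl => ?_⟩
  have := hdisj l k hl p
  rw [hk1, mul_one] at this
  exact this

/-- Superpixelized Potts model: the pixel-level Potts energy of a
superpixel-induced labeling equals the superpixel-level Potts energy,
where `ω k = ∑ p, w p * χ k p` and `ω kl = ∑ (p,q) ∈ N, w' pq * χ k p * χ l q`. -/
theorem superpixelize_potts {P : Type*} [Fintype P] [DecidableEq P] {K : ℕ}
    (N : Finset (P × P))
    (χ : Fin K → P → ℝ)
    (hχ01 : ∀ k p, χ k p = 0 ∨ χ k p = 1)
    (hdisj : ∀ k l, k ≠ l → ∀ p, χ k p * χ l p = 0)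
    (hpart : ∀ p, ∑ k, χ k p = 1)
    (x : Fin K → ℝ) (hx : ∀ k, x k = 0 ∨ x k = 1)
    (f : P → ℝ) (hf : ∀ p, f p = ∑ k, x k * χ k p)
    (w : P → ℝ) (w' : P × P → ℝ) :
    (∑ p, w p * f p) + ∑ pq ∈ N, w' pq * |f pq.1 - f pq.2| ^ 2
      = (∑ k, (∑ p, w p * χ k p) * x k)
        + ∑ k, ∑ l ∈ ({k}ᶜ : Finset (Fin K)),
            (∑ pq ∈ N, w' pq * χ k pq.1 * χ l pq.2) * |x k - x l| ^ 2 := by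
  -- choose the unique superpixel for each pixel
  choose σ hσ1 hσ0 using superpixel_unique χ hχ01 hdisj hpart
  have hfval : ∀ p, f p = x (σ p) := by
    intro p
    rw [hf p, Fintype.sum_eq_single (σ p) (fun l hl => by rw [hσ0 p l hl, mul_zero]),
      hσ1 p, mul_one]
  have hunary : (∑ p, w p * f p) = ∑ k, (∑ p, w p * χ k p) * x k := by
    have : ∀ p, w p * f p = ∑ k, (w p * χ k p) * x k := by
      intro p
      rw [hf p, Finset.mul_sum]
      exact Finset.sum_congr rfl fun k _ => by ring
    simp_rw [this, Finset.sum_mul]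
    exact Finset.sum_comm
  have hpair : ∀ pq : P × P, w' pq * |f pq.1 - f pq.2| ^ 2
      = ∑ k, ∑ l ∈ ({k}ᶜ : Finset (Fin K)),
          (w' pq * χ k pq.1 * χ l pq.2) * |x k - x l| ^ 2 := by
    intro pq
    obtain ⟨p, q⟩ := pq
    simp only
    rw [Fintype.sum_eq_single (σ p)]
    · rw [Finset.sum_eq_single (σ q)]
      · by_cases h : σ q = σ p
        · simp [h, hfval]
        · rw [hfval, hfval, hσ1 p, hσ1 q]
          ring
      · intro l _ hl
        rw [hσ0 q l hl]
        ring
      · intro h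
        simp only [Finset.mem_compl, Finset.mem_singleton, not_not] at h
        rw [h]
        simp
    · intro k hk
      apply Finset.sum_eq_zero
      intro l _
      rw [hσ0 p k hk]
      ring
  have hpairsum : ∑ pq ∈ N, w' pq * |f pq.1 - f pq.2| ^ 2
      = ∑ k, ∑ l ∈ ({k}ᶜ : Finset (Fin K)),
          (∑ pq ∈ N, w' pq * χ k pq.1 * χ l pq.2) * |x k - x l| ^ 2 := by
    rw [Finset.sum_congr rfl (fun pq _ => hpair pq)]
    rw [Finset.sum_comm]
    apply Finset.sum_congr rfl
    intro k _
    rw [Finset.sum_comm]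
    apply Finset.sum_congr rfl
    intro l _
    rw [Finset.sum_mul]
  rw [hunary, hpairsum]
end

section
/- (Equivalence of the constrained pixel-level minimization and the superpixel-level minimization.) Let P be a finite set of pixels, N a finite set of ordered pairs of pixels, χ^1,…,χ^K : P → {0,1} superpixel indicators with χ^k_p · χ^l_p = 0 for k ≠ l and Σ_{k=1}^K χ^k_p = 1 for all p, and let w : P → ℝ and w^{00}, w^{01}, w^{10}, w^{11} : N → ℝ. Define for each x ∈ {0,1}^K the pixel energy E(x) = Σ_{p∈P} w_p f_p + Σ_{(p,q)∈N} ( w^{00}_{pq}(1−f_p)(1−f_q) + w^{01}_{pq}(1−f_p)f_q + w^{10}_{pq} f_p(1−f_q) + w^{11}_{pq} f_p f_q ) with f_p = Σ_{k=1}^K x_k χ^k_p, and the superpixel energy F(x) = Σ_{k=1}^K ω̂_k x_k + Σ_{k≠l} ( ω^{00}_{kl}(1−x_k)(1−x_l) + ω^{01}_{kl}(1−x_k)x_l + ω^{10}_{kl} x_k(1−x_l) + ω^{11}_{kl} x_k x_l ), where ω̂_k = Σ_{p∈P} w_p χ^k_p − Σ_{(p,q)∈N} w^{00}_{pq} χ^k_p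 χ^k_q + Σ_{(p,q)∈N} w^{11}_{pq} χ^k_p χ^k_q and ω^{mn}_{kl} = Σ_{(p,q)∈N} w^{mn}_{pq} χ^k_p χ^l_q. Then x* ∈ {0,1}^K minimizes E over {0,1}^K if and only if x* minimizes F over {0,1}^K. -/
/-- Equivalence of the constrained pixel-level minimization and the
superpixel-level minimization: a binary superpixel labeling `x*` minimizes the
pixel-level MRF energy `E` (evaluated on the induced pixel labeling
`f p = ∑ k, x k * χ k p`) over binary labelings if and only if it minimizes the
superpixel-level MRF energy `F` over binary labelings. -/
theorem superpixel_minimizer_equiv {P : Type*} [Fintype P] [DecidableEq P] {K : ℕ}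
    (N : Finset (P × P))
    (χ : Fin K → P → ℝ)
    (hχ01 : ∀ k p, χ k p = 0 ∨ χ k p = 1)
    (hdisj : ∀ k l, k ≠ l → ∀ p, χ k p * χ l p = 0)
    (hpart : ∀ p, ∑ k, χ k p = 1)
    (w : P → ℝ) (w00 w01 w10 w11 : P × P → ℝ)
    (E F : (Fin K → ℝ) → ℝ)
    (hE : ∀ x : Fin K → ℝ,
      E x = (∑ p, w p * (∑ k, x k * χ k p))
        + ∑ pq ∈ N, (w00 pq * (1 - ∑ k, x k * χ k pq.1) * (1 - ∑ k, x k * χ k pq.2)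
            + w01 pq * (1 - ∑ k, x k * χ k pq.1) * (∑ k, x k * χ k pq.2)
            + w10 pq * (∑ k, x k * χ k pq.1) * (1 - ∑ k, x k * χ k pq.2)
            + w11 pq * (∑ k, x k * χ k pq.1) * (∑ k, x k * χ k pq.2)))
    (hF : ∀ x : Fin K → ℝ,
      F x = (∑ k, ((∑ p, w p * χ k p)
              - (∑ pq ∈ N, w00 pq * χ k pq.1 * χ k pq.2)
              + (∑ pq ∈ N, w11 pq * χ k pq.1 * χ k pq.2)) * x k)
        + ∑ k, ∑ l ∈ ({k}ᶜ : Finset (Fin K)),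
            ((∑ pq ∈ N, w00 pq * χ k pq.1 * χ l pq.2) * (1 - x k) * (1 - x l)
              + (∑ pq ∈ N, w01 pq * χ k pq.1 * χ l pq.2) * (1 - x k) * x l
              + (∑ pq ∈ N, w10 pq * χ k pq.1 * χ l pq.2) * x k * (1 - x l)
              + (∑ pq ∈ N, w11 pq * χ k pq.1 * χ l pq.2) * x k * x l))
    (xstar : Fin K → ℝ) (hxstar : ∀ k, xstar k = 0 ∨ xstar k = 1) :
    (∀ y : Fin K → ℝ, (∀ k, y k = 0 ∨ y k = 1) → E xstar ≤ E y)
      ↔ (∀ y : Fin K → ℝ, (∀ k, y k = 0 ∨ y k = 1) → F xstar ≤ F y) := by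

  have key : ∀ x : Fin K → ℝ, (∀ k, x k = 0 ∨ x k = 1) →
      E x = F x + ∑ k, ∑ pq ∈ N, w00 pq * χ k pq.1 * χ k pq.2 := by
    intro x hx
    have h1 : ∀ p, (1 : ℝ) - ∑ k, x k * χ k p = ∑ k, (1 - x k) * χ k p := by
      intro p
      simp only [sub_mul, one_mul, Finset.sum_sub_distrib, hpart p]
    -- the inner double-sum expansion of a pairwise term
    set D : Fin K → Fin K → ℝ := fun k l => ∑ pq ∈ N,
        (w00 pq * ((1 - x k) * χ k pq.1) * ((1 - x l) * χ l pq.2)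
          + w01 pq * ((1 - x k) * χ k pq.1) * (x l * χ l pq.2)
          + w10 pq * (x k * χ k pq.1) * ((1 - x l) * χ l pq.2)
          + w11 pq * (x k * χ k pq.1) * (x l * χ l pq.2)) with hD
    have exp : ∀ (a : ℝ) (u v : Fin K → ℝ),
        a * (∑ k, u k) * (∑ l, v l) = ∑ k, ∑ l, a * u k * v l := by
      intro a u v
      rw [mul_assoc, Finset.sum_mul_sum]
      rw [Finset.mul_sum]
      refine Finset.sum_congr rfl fun k _ => ?_
      rw [Finset.mul_sum]
      exact Finset.sum_congr rfl fun l _ => by ring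
    have claimA : (∑ pq ∈ N, (w00 pq * (1 - ∑ k, x k * χ k pq.1) * (1 - ∑ k, x k * χ k pq.2)
            + w01 pq * (1 - ∑ k, x k * χ k pq.1) * (∑ k, x k * χ k pq.2)
            + w10 pq * (∑ k, x k * χ k pq.1) * (1 - ∑ k, x k * χ k pq.2)
            + w11 pq * (∑ k, x k * χ k pq.1) * (∑ k, x k * χ k pq.2)))
        = ∑ k, ∑ l, D k l := by
      have swap : (∑ k, ∑ l, D k l) = ∑ pq ∈ N, ∑ k, ∑ l,
          (w00 pq * ((1 - x k) * χ k pq.1) * ((1 - x l) * χ l pq.2)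
            + w01 pq * ((1 - x k) * χ k pq.1) * (x l * χ l pq.2)
            + w10 pq * (x k * χ k pq.1) * ((1 - x l) * χ l pq.2)
            + w11 pq * (x k * χ k pq.1) * (x l * χ l pq.2)) := by
        simp only [hD]
        trans (∑ k, ∑ pq ∈ N, ∑ l,
          (w00 pq * ((1 - x k) * χ k pq.1) * ((1 - x l) * χ l pq.2)
            + w01 pq * ((1 - x k) * χ k pq.1) * (x l * χ l pq.2)
            + w10 pq * (x k * χ k pq.1) * ((1 - x l) * χ l pq.2)
            + w11 pq * (x k * χ k pq.1) * (x l * χ l pq.2)))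
        · exact Finset.sum_congr rfl fun k _ => Finset.sum_comm
        · exact Finset.sum_comm
      rw [swap]
      refine Finset.sum_congr rfl fun pq _ => ?_
      rw [h1 pq.1, h1 pq.2,
        exp (w00 pq) (fun k => (1 - x k) * χ k pq.1) (fun l => (1 - x l) * χ l pq.2),
        exp (w01 pq) (fun k => (1 - x k) * χ k pq.1) (fun l => x l * χ l pq.2),
        exp (w10 pq) (fun k => x k * χ k pq.1) (fun l => (1 - x l) * χ l pq.2),
        exp (w11 pq) (fun k => x k * χ k pq.1) (fun l => x l * χ l pq.2)]
      simp only [← Finset.sum_add_distrib]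
    have claimDiag : ∀ k, D k k
        = (1 - x k) * (∑ pq ∈ N, w00 pq * χ k pq.1 * χ k pq.2)
          + x k * (∑ pq ∈ N, w11 pq * χ k pq.1 * χ k pq.2) := by
      intro k
      rw [hD, Finset.mul_sum, Finset.mul_sum, ← Finset.sum_add_distrib]
      refine Finset.sum_congr rfl fun pq _ => ?_
      rcases hx k with h | h <;> simp [h] <;> ring
    have claimOff : ∀ k, ∀ l, D k l
        = ((∑ pq ∈ N, w00 pq * χ k pq.1 * χ l pq.2) * (1 - x k) * (1 - x l)
            + (∑ pq ∈ N, w01 pq * χ k pq.1 * χ l pq.2) * (1 - x k) * x l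
            + (∑ pq ∈ N, w10 pq * χ k pq.1 * χ l pq.2) * x k * (1 - x l)
            + (∑ pq ∈ N, w11 pq * χ k pq.1 * χ l pq.2) * x k * x l) := by
      intro k l
      rw [hD]
      simp only [Finset.sum_mul, ← Finset.sum_add_distrib]
      exact Finset.sum_congr rfl fun pq _ => by ring
    have hsplit : ∀ k, (∑ l, D k l) = (∑ l ∈ ({k}ᶜ : Finset (Fin K)), D k l) + D k k := by
      intro k
      rw [← Finset.sum_compl_add_sum ({k} : Finset (Fin K)) (D k), Finset.sum_singleton]
    have t1 : (∑ p, w p * ∑ k, x k * χ k p) = ∑ k, (∑ p, w p * χ k p) * x k := by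
      simp only [Finset.mul_sum]
      rw [Finset.sum_comm]
      refine Finset.sum_congr rfl fun k _ => ?_
      rw [Finset.sum_mul]
      exact Finset.sum_congr rfl fun p _ => by ring
    have hoff : (∑ k, ∑ l ∈ ({k}ᶜ : Finset (Fin K)), D k l)
        = ∑ k, ∑ l ∈ ({k}ᶜ : Finset (Fin K)),
            ((∑ pq ∈ N, w00 pq * χ k pq.1 * χ l pq.2) * (1 - x k) * (1 - x l)
              + (∑ pq ∈ N, w01 pq * χ k pq.1 * χ l pq.2) * (1 - x k) * x l
              + (∑ pq ∈ N, w10 pq * χ k pq.1 * χ l pq.2) * x k * (1 - x l)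
              + (∑ pq ∈ N, w11 pq * χ k pq.1 * χ l pq.2) * x k * x l) :=
      Finset.sum_congr rfl fun k _ => Finset.sum_congr rfl fun l _ => claimOff k l
    have hdiag : (∑ k, D k k)
        = (∑ k, (- (∑ pq ∈ N, w00 pq * χ k pq.1 * χ k pq.2)
            + (∑ pq ∈ N, w11 pq * χ k pq.1 * χ k pq.2)) * x k)
          + ∑ k, ∑ pq ∈ N, w00 pq * χ k pq.1 * χ k pq.2 := by
      rw [← Finset.sum_add_distrib]
      exact Finset.sum_congr rfl fun k _ => by rw [claimDiag k]; ring
    have hunary : (∑ k, ((∑ p, w p * χ k p)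
              - (∑ pq ∈ N, w00 pq * χ k pq.1 * χ k pq.2)
              + (∑ pq ∈ N, w11 pq * χ k pq.1 * χ k pq.2)) * x k)
        = (∑ k, (∑ p, w p * χ k p) * x k)
          + ∑ k, (- (∑ pq ∈ N, w00 pq * χ k pq.1 * χ k pq.2)
              + (∑ pq ∈ N, w11 pq * χ k pq.1 * χ k pq.2)) * x k := by
      rw [← Finset.sum_add_distrib]
      exact Finset.sum_congr rfl fun k _ => by ring
    have hsplitsum : (∑ k, ∑ l, D k l)
        = (∑ k, ∑ l ∈ ({k}ᶜ : Finset (Fin K)), D k l) + ∑ k, D k k := by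
      simp only [hsplit]
      rw [Finset.sum_add_distrib]
    rw [hE x, hF x, claimA, t1, hsplitsum, hdiag, hoff, hunary]
    ring
  constructor
  · intro h y hy
    have h1 := key xstar hxstar
    have h2 := key y hy
    have := h y hy
    linarith
  · intro h y hy
    have h1 := key xstar hxstar
    have h2 := key y hy
    have := h y hy
    linarith
end
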